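/- Let Δ be a complete simplicial multi-fan of dimension n. The numbers h_q(Δ) (defined via a generic vector v by h_q(Δ) = Σ_{μ(I)=q} w(I) where μ(I) counts positive coefficients in the expansion of v in the basis {v_i : i∈I}) are independent of the choice of the generic vector v. -/

import Mathlib

open Finset

/-- The pairing between a covector and a vector in `ℝⁿ`. -/
def dotp {n : ℕ} (x y : Fin n → ℝ) : ℝ := ∑ k, x k * y k

/-- A (simplicial) multi-fan of dimension `n` with rays indexed by `{1,…,d}`:
an augmented simplicial set `S`, ray vectors `v i` spanning the simplicial cones
`C(I) = pos span {v i : i ∈ I}`, and a weight `w` on simplices (the difference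
`w = w⁺ − w⁻` of the two weight functions, restricted to top simplices is what matters). -/
structure MultiFan (n d : ℕ) where
  S : Finset (Finset (Fin d))
  empty_mem : ∅ ∈ S
  downClosed : ∀ I ∈ S, ∀ J ⊆ I, J ∈ S
  card_le : ∀ I ∈ S, I.card ≤ n
  v : Fin d → (Fin n → ℝ)
  indep : ∀ I ∈ S, LinearIndependent ℝ (fun i : {x // x ∈ I} => v i.1)
  w : Finset (Fin d) → ℤ

namespace MultiFan

variable {n d : ℕ}

/-- `x` is generic for the projected multi-fan `Δ_K`: it avoids every linear subspace
spanned by a cone (containing `C(K)`) of dimension `< n`. -/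
def GenericFor (Δ : MultiFan n d) (K : Finset (Fin d)) (x : Fin n → ℝ) : Prop :=
  ∀ L ∈ Δ.S, K ⊆ L → L.card < n → x ∉ Submodule.span ℝ (Δ.v '' (L : Set (Fin d)))

def Generic (Δ : MultiFan n d) (x : Fin n → ℝ) : Prop := Δ.GenericFor ∅ x

/-- `x` lies (mod the span of `C(K)`) in the projected cone `C_K(I)`. -/
def InProjCone (Δ : MultiFan n d) (K I : Finset (Fin d)) (x : Fin n → ℝ) : Prop :=
  ∃ a : Fin d → ℝ, (∀ j ∈ I \ K, 0 ≤ a j) ∧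
    (x - ∑ j ∈ I \ K, a j • Δ.v j) ∈ Submodule.span ℝ (Δ.v '' (K : Set (Fin d)))

open scoped Classical in
/-- `d_x` for the projected multi-fan `Δ_K`: the sum of the weights of top cones whose
projection contains the projection of `x`. -/
noncomputable def dv (Δ : MultiFan n d) (K : Finset (Fin d)) (x : Fin n → ℝ) : ℤ :=
  ∑ I ∈ Δ.S.filter (fun I => I.card = n ∧ K ⊆ I ∧ Δ.InProjCone K I x), Δ.w I

/-- Pre-completeness of the projected multi-fan `Δ_K`. -/
def PreCompleteAt (Δ : MultiFan n d) (K : Finset (Fin d)) : Prop :=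
  (∃ I ∈ Δ.S, K ⊆ I ∧ I.card = n) ∧
  ∀ x y : Fin n → ℝ, Δ.GenericFor K x → Δ.GenericFor K y → Δ.dv K x = Δ.dv K y

/-- Completeness: every projected multi-fan is pre-complete. -/
def Complete (Δ : MultiFan n d) : Prop := ∀ K ∈ Δ.S, Δ.PreCompleteAt K

open scoped Classical in
/-- The Duistermaat–Heckman function of the simple multi-polytope `(Δ, {F_i})`, where
`F_i = {u : ⟨u, v i⟩ = c i}`, the data `uu I i = u_i^I` is the dual basis of `{v i : i ∈ I}`
and `ξ ∈ V` is a generic vector.  For `I ∈ Σ^{(n)}` the coefficient of `u − u_I` on `u_i^I`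
is `⟨u, v i⟩ − c i`, so membership in the cone `C^*(I)^+` is expressed by the conditions below. -/
noncomputable def DH (Δ : MultiFan n d) (c : Fin d → ℝ)
    (uu : Finset (Fin d) → Fin d → (Fin n → ℝ)) (ξ : Fin n → ℝ) (u : Fin n → ℝ) : ℤ :=
  ∑ I ∈ Δ.S.filter (fun I => I.card = n),
    if (∀ i ∈ I, (0 < dotp (uu I i) ξ ∧ c i ≤ dotp u (Δ.v i)) ∨
                 (dotp (uu I i) ξ < 0 ∧ dotp u (Δ.v i) ≤ c i))
    then (-1 : ℤ) ^ (I.filter fun i => 0 < dotp (uu I i) ξ).card * Δ.w I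
    else 0

/-- `uu I i = u_i^I` is the basis dual to `{v i : i ∈ I}` for each top simplex `I`. -/
def DualBasis (Δ : MultiFan n d) (uu : Finset (Fin d) → Fin d → (Fin n → ℝ)) : Prop :=
  ∀ I ∈ Δ.S, I.card = n → ∀ i ∈ I, ∀ j ∈ I,
    dotp (uu I i) (Δ.v j) = if i = j then 1 else 0

/-- Genericity of `ξ` needed for the DH function: `⟨u_i^I, ξ⟩ ≠ 0` for all `I, i`. -/
def GenericDual (Δ : MultiFan n d) (uu : Finset (Fin d) → Fin d → (Fin n → ℝ))
    (ξ : Fin n → ℝ) : Prop :=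
  ∀ I ∈ Δ.S, I.card = n → ∀ i ∈ I, dotp (uu I i) ξ ≠ 0

end MultiFan

/-!
Fix a generic `x` and write it, for each top simplex `I`, in the basis `{v i : i ∈ I}`;
genericity makes all coordinates nonzero. Let `N(I)` be the set of indices of the negative
ones. The image of `x` lies in the projected cone `C_K(I)` exactly when `N(I) ⊆ K ⊆ I`, so
`d_x(Δ_K)` is the total weight of these `I`. Summing over the simplices `K` of size `j` and
counting the sets between `N(I)` and `I` gives `∑_K d_x(Δ_K) = ∑_m C(n - m, j - m) h⁻_m`, where
`h⁻_m` is the total weight of the top simplices with `|N(I)| = m`. This system is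
unitriangular in `(h⁻_m)` and, by completeness, its left side does not depend on `x`; hence
neither does `h⁻`, and `h_q = h⁻_{n-q}`.
-/

theorem Finset.card_filter_powerset_superset_card_eq {α : Type*} [DecidableEq α]
    {A B : Finset α} (hAB : A ⊆ B) (j : ℕ) :
    #{K ∈ B.powerset | A ⊆ K ∧ #K = j} =
      if #A ≤ j then (#B - #A).choose (j - #A) else 0 := by
  split_ifs with hj
  · rw [← card_sdiff_of_subset hAB, ← card_powersetCard]
    refine card_bij' (fun K _ => K \ A) (fun K _ => K ∪ A) (fun K hK => ?_) (fun K hK => ?_)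
      (fun K hK => ?_) (fun K hK => ?_)
    · rw [mem_filter, mem_powerset] at hK
      rw [mem_powersetCard, card_sdiff_of_subset hK.2.1, hK.2.2]
      exact ⟨sdiff_subset_sdiff hK.1 le_rfl, rfl⟩
    · rw [mem_powersetCard] at hK
      rw [mem_filter, mem_powerset,
        card_union_of_disjoint (disjoint_of_subset_left hK.1 sdiff_disjoint), hK.2]
      exact ⟨union_subset (hK.1.trans sdiff_subset) hAB, subset_union_right, by omega⟩
    · exact sdiff_union_of_subset (mem_filter.1 hK).2.1
    · exact union_sdiff_cancel_right
        (disjoint_of_subset_left (mem_powersetCard.1 hK).1 sdiff_disjoint)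
  · refine card_eq_zero.2 (filter_false_of_mem fun K _ ⟨hAK, hK⟩ => hj ?_)
    exact hK ▸ card_le_card hAK

theorem Finset.card_filter_pos_add_card_filter_neg {ι α : Type*} [LinearOrder α] [Zero α]
    {s : Finset ι} {a : ι → α} (ha : ∀ i ∈ s, a i ≠ 0) :
    #{i ∈ s | 0 < a i} + #{i ∈ s | a i < 0} = #s := by
  rw [← card_filter_add_card_filter_not (s := s) (fun i => 0 < a i)]
  congr 2
  exact filter_congr fun i hi => not_lt.trans (ha i hi).le_iff_lt |>.symm

theorem eq_of_sum_range_mul_eq_of_unitriangular {R : Type*} [Ring R] {N : ℕ}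
    {c : ℕ → ℕ → R} (hdiag : ∀ j, c j j = 1) (hupper : ∀ j m, j < m → c j m = 0)
    {f g : ℕ → R}
    (h : ∀ j < N, ∑ m ∈ range N, c j m * f m = ∑ m ∈ range N, c j m * g m) :
    ∀ j < N, f j = g j := by
  intro j
  induction j using Nat.strong_induction_on with
  | _ j ih =>
    intro hj
    have hsum : ∑ m ∈ range N, c j m * (f m - g m) = 0 := by
      simp only [mul_sub, sum_sub_distrib, h j hj, sub_self]
    rwa [sum_eq_single_of_mem j (mem_range.2 hj) fun m hm hmj => ?_, hdiag, one_mul,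
      sub_eq_zero] at hsum
    rcases lt_or_gt_of_ne hmj with hlt | hgt
    · rw [ih m hlt (hlt.trans hj), sub_self, mul_zero]
    · rw [hupper j m hgt, zero_mul]

namespace MultiFan

variable {n d : ℕ}

/-- With `μ I` the number of positive coordinates of a generic vector in the basis of `I`,
`hNumber Δ μ q` is the paper's `h_q(Δ)`. -/
def hNumber (Δ : MultiFan n d) (μ : Finset (Fin d) → ℕ) (q : ℕ) : ℤ :=
  ∑ I ∈ Δ.S with I.card = n ∧ μ I = q, Δ.w I

variable {Δ : MultiFan n d}

theorem Generic.genericFor {x : Fin n → ℝ} (hx : Δ.Generic x)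
    (K : Finset (Fin d)) : Δ.GenericFor K x :=
  fun L hL _ hcard => hx L hL (empty_subset L) hcard

theorem coeff_eq_of_sum_smul_eq {I : Finset (Fin d)} (hI : I ∈ Δ.S) {a b : Fin d → ℝ}
    (hab : ∑ i ∈ I, a i • Δ.v i = ∑ i ∈ I, b i • Δ.v i) : ∀ i ∈ I, a i = b i := by
  have hindep : LinearIndepOn ℝ Δ.v (I : Set (Fin d)) := Δ.indep I hI
  intro i hi
  refine sub_eq_zero.1 (linearIndepOn_iff'.1 hindep I (fun i => a i - b i) subset_rfl ?_ i hi)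
  simp only [sub_smul, sum_sub_distrib, hab, sub_self]

theorem coeff_ne_zero_of_generic {x : Fin n → ℝ} (hx : Δ.Generic x) {I : Finset (Fin d)}
    (hI : I ∈ Δ.S) (hcard : I.card = n) {a : Fin d → ℝ} (ha : x = ∑ i ∈ I, a i • Δ.v i) :
    ∀ i ∈ I, a i ≠ 0 := by
  intro i hi hai
  refine hx (I.erase i) (Δ.downClosed I hI _ (erase_subset i I)) (empty_subset _)
    (hcard ▸ card_erase_lt_of_mem hi) ?_
  rw [ha, ← add_sum_erase I _ hi, hai, zero_smul, zero_add]
  exact (Submodule.mem_span_image_finset_iff_exists_fun' ℝ).2 ⟨a, rfl⟩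

theorem inProjCone_iff {K I : Finset (Fin d)} (hI : I ∈ Δ.S) (hKI : K ⊆ I) {x : Fin n → ℝ}
    {a : Fin d → ℝ} (ha : x = ∑ i ∈ I, a i • Δ.v i) :
    Δ.InProjCone K I x ↔ ∀ j ∈ I \ K, 0 ≤ a j := by
  have hsplit : ∀ b : Fin d → ℝ,
      ∑ i ∈ I, b i • Δ.v i = ∑ j ∈ I \ K, b j • Δ.v j + ∑ k ∈ K, b k • Δ.v k :=
    fun b => (sum_sdiff hKI).symm
  constructor
  · rintro ⟨c, hc, hspan⟩ j hj
    obtain ⟨e, he⟩ := (Submodule.mem_span_image_finset_iff_exists_fun' ℝ).1 hspan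
    let b : Fin d → ℝ := fun i => if i ∈ K then e i else c i
    have hdiff : ∑ j ∈ I \ K, b j • Δ.v j = ∑ j ∈ I \ K, c j • Δ.v j :=
      sum_congr rfl fun i hi => by simp only [b, if_neg (mem_sdiff.1 hi).2]
    have hK : ∑ k ∈ K, b k • Δ.v k = ∑ k ∈ K, e k • Δ.v k :=
      sum_congr rfl fun i hi => by simp only [b, if_pos hi]
    have hb : x = ∑ i ∈ I, b i • Δ.v i := by
      rw [hsplit, hdiff, hK, he, add_sub_cancel]
    have hab := coeff_eq_of_sum_smul_eq hI (ha.symm.trans hb) j (mem_sdiff.1 hj).1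
    simp only [b, if_neg (mem_sdiff.1 hj).2] at hab
    exact hab ▸ hc j hj
  · refine fun h => ⟨a, h, (Submodule.mem_span_image_finset_iff_exists_fun' ℝ).2 ⟨a, ?_⟩⟩
    rw [ha, hsplit, add_sub_cancel_left]

theorem dv_eq_sum {x : Fin n → ℝ} {a : Finset (Fin d) → Fin d → ℝ}
    (ha : ∀ I ∈ Δ.S, I.card = n → x = ∑ i ∈ I, a I i • Δ.v i) (K : Finset (Fin d)) :
    Δ.dv K x = ∑ I ∈ Δ.S with I.card = n ∧ K ⊆ I ∧ {i ∈ I | a I i < 0} ⊆ K, Δ.w I := by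
  classical
  rw [dv]
  refine sum_congr (filter_congr fun I hI => and_congr_right fun hcard => ?_) fun _ _ => rfl
  refine and_congr_right fun hKI => ?_
  rw [inProjCone_iff hI hKI (ha I hI hcard)]
  constructor
  · intro h i hi
    by_contra hiK
    exact (mem_filter.1 hi).2.not_ge (h i (mem_sdiff.2 ⟨(mem_filter.1 hi).1, hiK⟩))
  · intro h j hj
    by_contra hneg
    exact (mem_sdiff.1 hj).2 (h (mem_filter.2 ⟨(mem_sdiff.1 hj).1, not_le.1 hneg⟩))

theorem sum_mul_w_eq_sum_mul_hNumber (μ : Finset (Fin d) → ℕ)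
    (hμ : ∀ I ∈ Δ.S, I.card = n → μ I ≤ n) (f : ℕ → ℤ) :
    ∑ I ∈ Δ.S with I.card = n, f (μ I) * Δ.w I = ∑ m ∈ range (n + 1), f m * Δ.hNumber μ m := by
  rw [← sum_fiberwise_of_maps_to (g := μ) (t := range (n + 1))
    fun I hI => mem_range_succ_iff.2 (hμ I (mem_filter.1 hI).1 (mem_filter.1 hI).2)]
  refine sum_congr rfl fun m _ => ?_
  rw [hNumber, mul_sum, filter_filter]
  exact sum_congr rfl fun I hI => by rw [(mem_filter.1 hI).2.2]

theorem sum_dv_eq_sum_choose_mul_w {x : Fin n → ℝ} {a : Finset (Fin d) → Fin d → ℝ}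
    (ha : ∀ I ∈ Δ.S, I.card = n → x = ∑ i ∈ I, a I i • Δ.v i) (j : ℕ) :
    ∑ K ∈ Δ.S with K.card = j, Δ.dv K x =
      ∑ I ∈ Δ.S with I.card = n,
        ((if #{i ∈ I | a I i < 0} ≤ j then (n - #{i ∈ I | a I i < 0}).choose
          (j - #{i ∈ I | a I i < 0}) else 0 : ℕ) : ℤ) * Δ.w I := by
  have hdv : ∀ K, Δ.dv K x = ∑ I ∈ Δ.S with I.card = n,
      if K ⊆ I ∧ {i ∈ I | a I i < 0} ⊆ K then Δ.w I else 0 := fun K => by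
    rw [dv_eq_sum ha, ← sum_filter, filter_filter]
  rw [sum_congr rfl fun K _ => hdv K, sum_comm]
  refine sum_congr rfl fun I hI => ?_
  obtain ⟨hIS, hcard⟩ := mem_filter.1 hI
  have hcount : {K ∈ {K ∈ Δ.S | K.card = j} | K ⊆ I ∧ {i ∈ I | a I i < 0} ⊆ K} =
      {K ∈ I.powerset | {i ∈ I | a I i < 0} ⊆ K ∧ K.card = j} := by
    ext K
    simp only [mem_filter, mem_powerset]
    exact ⟨fun ⟨⟨_, hK⟩, hKI, hNK⟩ => ⟨hKI, hNK, hK⟩,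
      fun ⟨hKI, hNK, hK⟩ => ⟨⟨Δ.downClosed I hIS K hKI, hK⟩, hKI, hNK⟩⟩
  rw [← sum_filter, sum_const, nsmul_eq_mul, hcount,
    card_filter_powerset_superset_card_eq (filter_subset _ I), hcard]

theorem sum_dv_eq_sum_choose_mul_hNumber {x : Fin n → ℝ} {a : Finset (Fin d) → Fin d → ℝ}
    (ha : ∀ I ∈ Δ.S, I.card = n → x = ∑ i ∈ I, a I i • Δ.v i) (j : ℕ) :
    ∑ K ∈ Δ.S with K.card = j, Δ.dv K x =
      ∑ m ∈ range (n + 1), ((if m ≤ j then (n - m).choose (j - m) else 0 : ℕ) : ℤ) *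
        Δ.hNumber (fun I => #{i ∈ I | a I i < 0}) m := by
  rw [sum_dv_eq_sum_choose_mul_w ha, sum_mul_w_eq_sum_mul_hNumber _
    (fun I _ hcard => hcard ▸ card_filter_le _ _)
    fun m => ((if m ≤ j then (n - m).choose (j - m) else 0 : ℕ) : ℤ)]

theorem hNumber_card_pos_eq {x : Fin n → ℝ} (hx : Δ.Generic x)
    {a : Finset (Fin d) → Fin d → ℝ}
    (ha : ∀ I ∈ Δ.S, I.card = n → x = ∑ i ∈ I, a I i • Δ.v i) (q : ℕ) :
    Δ.hNumber (fun I => #{i ∈ I | 0 < a I i}) q =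
      if q ≤ n then Δ.hNumber (fun I => #{i ∈ I | a I i < 0}) (n - q) else 0 := by
  split_ifs with hq
  · refine sum_congr (filter_congr fun I hI => and_congr_right fun hcard => ?_) fun _ _ => rfl
    have hcount := card_filter_pos_add_card_filter_neg
      (coeff_ne_zero_of_generic hx hI hcard (ha I hI hcard))
    dsimp only
    omega
  · refine sum_eq_zero fun I hI => absurd (mem_filter.1 hI).2 fun ⟨hcard, hpos⟩ => hq ?_
    exact hpos ▸ hcard ▸ card_filter_le _ _

end MultiFan

/-- The numbers `h_q(Δ) = ∑_{μ(I)=q} w(I)` of a complete simplicial multi-fan are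
independent of the choice of the generic vector used to define `μ`. -/
theorem stmt1 (n d : ℕ) (Δ : MultiFan n d) (hC : Δ.Complete)
    (x y : Fin n → ℝ) (hx : Δ.Generic x) (hy : Δ.Generic y)
    (a b : Finset (Fin d) → Fin d → ℝ)
    (ha : ∀ I ∈ Δ.S, I.card = n → x = ∑ i ∈ I, a I i • Δ.v i)
    (hb : ∀ I ∈ Δ.S, I.card = n → y = ∑ i ∈ I, b I i • Δ.v i) :
    ∀ q : ℕ,
      ∑ I ∈ Δ.S.filter (fun I => I.card = n ∧
          (I.filter fun i => 0 < a I i).card = q), Δ.w I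
    = ∑ I ∈ Δ.S.filter (fun I => I.card = n ∧
          (I.filter fun i => 0 < b I i).card = q), Δ.w I := by
  intro q
  have hneg : ∀ m < n + 1, Δ.hNumber (fun I => #{i ∈ I | a I i < 0}) m =
      Δ.hNumber (fun I => #{i ∈ I | b I i < 0}) m := by
    refine eq_of_sum_range_mul_eq_of_unitriangular
      (c := fun j m => ((if m ≤ j then (n - m).choose (j - m) else 0 : ℕ) : ℤ))
      (fun j => by simp) (fun j m hjm => by simp [hjm.not_ge]) fun j _ => ?_
    rw [← MultiFan.sum_dv_eq_sum_choose_mul_hNumber ha,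
      ← MultiFan.sum_dv_eq_sum_choose_mul_hNumber hb]
    exact sum_congr rfl fun K hK =>
      (hC K (mem_filter.1 hK).1).2 x y (hx.genericFor K) (hy.genericFor K)
  change Δ.hNumber _ q = Δ.hNumber _ q
  rw [MultiFan.hNumber_card_pos_eq hx ha, MultiFan.hNumber_card_pos_eq hy hb]
  split_ifs
  · exact hneg _ (by omega)
  · rfl
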